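/- Let X_1, X_2, X_r, Y_1, Y_r, Ŷ_r be finite discrete random variables satisfying I(X_r; Y_1 | X_1) ≥ I(Ŷ_r; Y_r | X_1, X_r, Y_1) and the identity I(Ŷ_r; Y_r | X_1, X_r, Y_1) = I(Ŷ_r; X_2 | X_1, X_r, Y_1) + I(Ŷ_r; Y_r | X_1, X_2, X_r, Y_1). Then I(X_2; Y_1, Ŷ_r | X_1, X_r) ≤ I(X_2, X_r; Y_1 | X_1) − I(Ŷ_r; Y_r | X_1, X_2, X_r, Y_1). -/

import Mathlib

open scoped BigOperators Classical

/-- Probability that the random variable `X` takes value `a`, under pmf `p` on `Ω`. -/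
noncomputable def jp {Ω A : Type*} [Fintype Ω] (p : Ω → ℝ) (X : Ω → A) (a : A) : ℝ :=
  ∑ ω, if X ω = a then p ω else 0

/-- Conditional mutual information `I(X;Y|Z)` of finite discrete random variables
(natural logarithm). -/
noncomputable def condMI {Ω A B C : Type*} [Fintype Ω] [Fintype A] [Fintype B] [Fintype C]
    (p : Ω → ℝ) (X : Ω → A) (Y : Ω → B) (Z : Ω → C) : ℝ :=
  ∑ a : A, ∑ b : B, ∑ c : C,
    jp p (fun ω => (X ω, Y ω, Z ω)) (a, b, c) *
      Real.log (jp p (fun ω => (X ω, Y ω, Z ω)) (a, b, c) * jp p Z c /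
        (jp p (fun ω => (X ω, Z ω)) (a, c) * jp p (fun ω => (Y ω, Z ω)) (b, c)))

/-- `p` is a probability mass function. -/
def IsPMF {Ω : Type*} [Fintype Ω] (p : Ω → ℝ) : Prop :=
  (∀ ω, 0 ≤ p ω) ∧ ∑ ω, p ω = 1

/-! Two applications of the chain rule give
`I(X₂; Y₁, Ŷ | X₁, X_r) = I(X₂; Y₁ | X₁, X_r) + I(Ŷ; X₂ | X₁, X_r, Y₁)` and
`I(X₂, X_r; Y₁ | X₁) = I(X_r; Y₁ | X₁) + I(X₂; Y₁ | X₁, X_r)`.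
The claimed inequality is then linear arithmetic in the hypotheses: by the assumed identity
`I(Ŷ; X₂ | X₁, X_r, Y₁) = I(Ŷ; Y_r | X₁, X_r, Y₁) - I(Ŷ; Y_r | X₁, X₂, X_r, Y₁)`, and the first
term is at most `I(X_r; Y₁ | X₁)` by the constraint. -/

open Finset

section Jp

variable {Ω A B : Type*} [Fintype Ω] {p : Ω → ℝ}

lemma jp_congr (f : Ω → A) (g : Ω → B) (x : A) (y : B) (h : ∀ ω, f ω = x ↔ g ω = y) :
    jp p f x = jp p g y :=
  sum_congr rfl fun ω _ => if_congr (h ω) rfl rfl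

lemma jp_pos (hp : ∀ ω, 0 ≤ p ω) (f : Ω → A) {ω : Ω} (h : 0 < p ω) : 0 < jp p f (f ω) :=
  calc 0 < p ω := h
    _ = if f ω = f ω then p ω else 0 := (if_pos rfl).symm
    _ ≤ jp p f (f ω) :=
      single_le_sum (f := fun ω' => if f ω' = f ω then p ω' else 0)
        (fun ω' _ => by split_ifs <;> simp [hp ω']) (mem_univ ω)

lemma sum_jp_mul [Fintype A] (f : Ω → A) (F : A → ℝ) :
    ∑ a, jp p f a * F a = ∑ ω, p ω * F (f ω) := by
  simp_rw [jp, sum_mul, ite_mul, zero_mul]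
  rw [sum_comm]
  simp

end Jp

lemma Real.log_mul_div_mul {a b c d : ℝ} (ha : 0 < a) (hb : 0 < b) (hc : 0 < c) (hd : 0 < d) :
    Real.log (a * b / (c * d)) = Real.log a + Real.log b - Real.log c - Real.log d := by
  rw [Real.log_div (by positivity) (by positivity), Real.log_mul ha.ne' hb.ne',
    Real.log_mul hc.ne' hd.ne']
  ring

section CondMI

variable {Ω A B C D A' B' C' : Type*} [Fintype Ω] [Fintype A] [Fintype B] [Fintype C]
  [Fintype D] [Fintype A'] [Fintype B'] [Fintype C'] {p : Ω → ℝ}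

lemma condMI_eq_sum (X : Ω → A) (Y : Ω → B) (Z : Ω → C) :
    condMI p X Y Z = ∑ ω, p ω *
      Real.log (jp p (fun ω' => (X ω', Y ω', Z ω')) (X ω, Y ω, Z ω) * jp p Z (Z ω) /
        (jp p (fun ω' => (X ω', Z ω')) (X ω, Z ω) *
          jp p (fun ω' => (Y ω', Z ω')) (Y ω, Z ω))) := by
  rw [← sum_jp_mul (fun ω => (X ω, Y ω, Z ω)) fun x =>
    Real.log (jp p (fun ω => (X ω, Y ω, Z ω)) x * jp p Z x.2.2 /
      (jp p (fun ω => (X ω, Z ω)) (x.1, x.2.2) * jp p (fun ω => (Y ω, Z ω)) (x.2.1, x.2.2)))]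
  simp only [condMI, Fintype.sum_prod_type]

lemma condMI_congr {X : Ω → A} {Y : Ω → B} {Z : Ω → C} {X' : Ω → A'} {Y' : Ω → B'}
    {Z' : Ω → C'} (hX : ∀ ω ω', X ω = X ω' ↔ X' ω = X' ω')
    (hY : ∀ ω ω', Y ω = Y ω' ↔ Y' ω = Y' ω') (hZ : ∀ ω ω', Z ω = Z ω' ↔ Z' ω = Z' ω') :
    condMI p X Y Z = condMI p X' Y' Z' := by
  simp only [condMI_eq_sum]
  refine sum_congr rfl fun ω _ => ?_
  rw [jp_congr (fun ω' => (X ω', Y ω', Z ω')) (fun ω' => (X' ω', Y' ω', Z' ω'))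
      (X ω, Y ω, Z ω) (X' ω, Y' ω, Z' ω)
      (fun ω' => by simp only [Prod.ext_iff, hX ω' ω, hY ω' ω, hZ ω' ω]),
    jp_congr Z Z' (Z ω) (Z' ω) (fun ω' => hZ ω' ω),
    jp_congr (fun ω' => (X ω', Z ω')) (fun ω' => (X' ω', Z' ω')) (X ω, Z ω) (X' ω, Z' ω)
      (fun ω' => by simp only [Prod.ext_iff, hX ω' ω, hZ ω' ω]),
    jp_congr (fun ω' => (Y ω', Z ω')) (fun ω' => (Y' ω', Z' ω')) (Y ω, Z ω) (Y' ω, Z' ω)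
      (fun ω' => by simp only [Prod.ext_iff, hY ω' ω, hZ ω' ω])]

lemma condMI_congr_cond (X : Ω → A) (Y : Ω → B) {Z : Ω → C} {Z' : Ω → C'}
    (hZ : ∀ ω ω', Z ω = Z ω' ↔ Z' ω = Z' ω') : condMI p X Y Z = condMI p X Y Z' :=
  condMI_congr (fun _ _ => Iff.rfl) (fun _ _ => Iff.rfl) hZ

lemma condMI_comm (X : Ω → A) (Y : Ω → B) (Z : Ω → C) :
    condMI p X Y Z = condMI p Y X Z := by
  simp only [condMI_eq_sum]
  refine sum_congr rfl fun ω _ => ?_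
  rw [jp_congr _ (fun ω' => (Y ω', X ω', Z ω')) _ (Y ω, X ω, Z ω)
      (fun ω' => by simp only [Prod.ext_iff]; tauto),
    mul_comm (jp p (fun ω' => (X ω', Z ω')) _)]

lemma condMI_chain (hp : ∀ ω, 0 ≤ p ω) (X : Ω → A) (Y : Ω → B) (Z : Ω → C) (W : Ω → D) :
    condMI p X (fun ω => (Y ω, Z ω)) W =
      condMI p X Y W + condMI p X Z (fun ω => (Y ω, W ω)) := by
  simp only [condMI_eq_sum, ← sum_add_distrib]
  refine sum_congr rfl fun ω _ => ?_
  rcases (hp ω).eq_or_lt with h | h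
  · simp [← h]
  simp only [Real.log_mul_div_mul (jp_pos hp _ h) (jp_pos hp _ h) (jp_pos hp _ h) (jp_pos hp _ h)]
  rw [jp_congr (fun ω' => (X ω', (Y ω', Z ω'), W ω')) (fun ω' => (X ω', Z ω', Y ω', W ω'))
      (X ω, (Y ω, Z ω), W ω) (X ω, Z ω, Y ω, W ω) (fun ω' => by simp only [Prod.ext_iff]; tauto),
    jp_congr (fun ω' => ((Y ω', Z ω'), W ω')) (fun ω' => (Z ω', Y ω', W ω'))
      ((Y ω, Z ω), W ω) (Z ω, Y ω, W ω) (fun ω' => by simp only [Prod.ext_iff]; tauto)]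
  ring

lemma condMI_chain_left (hp : ∀ ω, 0 ≤ p ω) (X : Ω → A) (Y : Ω → B) (Z : Ω → C)
    (W : Ω → D) :
    condMI p (fun ω => (X ω, Y ω)) Z W =
      condMI p X Z W + condMI p Y Z (fun ω => (X ω, W ω)) := by
  rw [condMI_comm, condMI_chain hp, condMI_comm Z X, condMI_comm Z Y]

end CondMI

/-- if `I(Xr;Y1|X1) ≥ I(Yh;Yr|X1,Xr,Y1)` and
`I(Yh;Yr|X1,Xr,Y1) = I(Yh;X2|X1,Xr,Y1) + I(Yh;Yr|X1,X2,Xr,Y1)`, then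
`I(X2;Y1,Yh|X1,Xr) ≤ I(X2,Xr;Y1|X1) − I(Yh;Yr|X1,X2,Xr,Y1)`. -/
theorem stmt5 {Ω A1 A2 Ar B1 Br Bh : Type*} [Fintype Ω]
    [Fintype A1] [Fintype A2] [Fintype Ar] [Fintype B1] [Fintype Br] [Fintype Bh]
    (p : Ω → ℝ) (hp : IsPMF p)
    (X1 : Ω → A1) (X2 : Ω → A2) (Xr : Ω → Ar) (Y1 : Ω → B1) (Yr : Ω → Br) (Yh : Ω → Bh)
    (hconstraint : condMI p Xr Y1 X1 ≥ condMI p Yh Yr (fun ω => (X1 ω, Xr ω, Y1 ω)))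
    (hident : condMI p Yh Yr (fun ω => (X1 ω, Xr ω, Y1 ω)) =
      condMI p Yh X2 (fun ω => (X1 ω, Xr ω, Y1 ω)) +
        condMI p Yh Yr (fun ω => (X1 ω, X2 ω, Xr ω, Y1 ω))) :
    condMI p X2 (fun ω => (Y1 ω, Yh ω)) (fun ω => (X1 ω, Xr ω)) ≤
      condMI p (fun ω => (X2 ω, Xr ω)) Y1 X1 -
        condMI p Yh Yr (fun ω => (X1 ω, X2 ω, Xr ω, Y1 ω)) := by
  have hsplit_lhs : condMI p X2 (fun ω => (Y1 ω, Yh ω)) (fun ω => (X1 ω, Xr ω)) =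
      condMI p X2 Y1 (fun ω => (X1 ω, Xr ω)) +
        condMI p Yh X2 (fun ω => (X1 ω, Xr ω, Y1 ω)) := by
    rw [condMI_chain hp.1, condMI_comm X2 Yh]
    congr 1
    exact condMI_congr_cond _ _ fun ω ω' => by simp only [Prod.ext_iff]; tauto
  have hsplit_rhs : condMI p (fun ω => (X2 ω, Xr ω)) Y1 X1 =
      condMI p Xr Y1 X1 + condMI p X2 Y1 (fun ω => (X1 ω, Xr ω)) := by
    rw [condMI_congr (X' := fun ω => (Xr ω, X2 ω)) (Y' := Y1) (Z' := X1)
        (fun ω ω' => by simp only [Prod.ext_iff]; tauto) (fun _ _ => Iff.rfl) (fun _ _ => Iff.rfl),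
      condMI_chain_left hp.1]
    congr 1
    exact condMI_congr_cond _ _ fun ω ω' => by simp only [Prod.ext_iff]; tauto
  rw [hsplit_lhs, hsplit_rhs]
  linarith
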